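/- arXiv:1803.00058 — 2 statements merged into one kernel-verified Lean document; each statement's English description precedes it below -/
import Mathlib

section
/- Let 𝔄 be a complete normed ℝ-algebra with unit (e.g., real n×n matrices with the operator norm) and let A, B ∈ 𝔄. Then there exists a constant C ≥ 0 such that for every h ∈ [0,1], ‖exp(h • (A + B)) − exp((h/2) • A) * exp(h • B) * exp((h/2) • A)‖ ≤ C · h³; i.e., the symmetric Strang splitting approximates the exact propagator to second order (local error of order h³ per step). -/
/-!
Expand all three exponentials in powers of `h`: `exp (h • X) = ∑ hⁿ • Xⁿ / n!`. By absolute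
convergence, the Strang product is again a power series in `h`, whose coefficients are Cauchy
products of the exponential coefficients. A direct computation shows that its coefficients of
`h⁰`, `h¹`, `h²` agree with those of `exp (h • (A + B))`, even though `A` and `B` need not
commute. For `|h| ≤ 1` the remaining tail is bounded by `|h|³` times the sum of the
norms of the coefficient differences.
-/

open NormedSpace Finset
open scoped Nat

namespace StrangSplitting

variable {𝔄 : Type*} [NormedRing 𝔄] [NormedAlgebra ℝ 𝔄]

noncomputable def expCoeff (X : 𝔄) (n : ℕ) : 𝔄 := (n !⁻¹ : ℝ) • X ^ n

def cauchyProduct {R : Type*} [NonUnitalNonAssocSemiring R] (a b : ℕ → R) (n : ℕ) : R :=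
  ∑ kl ∈ antidiagonal n, a kl.1 * b kl.2

lemma summable_norm_expCoeff (X : 𝔄) : Summable fun n => ‖expCoeff X n‖ :=
  norm_expSeries_summable' X

lemma exp_smul_eq_tsum (X : 𝔄) (h : ℝ) : exp (h • X) = ∑' n, h ^ n • expCoeff X n := by
  rw [exp_eq_tsum ℝ]
  exact tsum_congr fun n => by rw [expCoeff, smul_pow, smul_comm]

lemma summable_norm_pow_smul {E : Type*} [SeminormedAddCommGroup E] [NormedSpace ℝ E]
    {a : ℕ → E} (ha : Summable fun n => ‖a n‖) {h : ℝ} (hh : |h| ≤ 1) :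
    Summable fun n => ‖h ^ n • a n‖ := by
  refine ha.of_nonneg_of_le (fun _ => norm_nonneg _) fun n => ?_
  rw [norm_smul, norm_pow, Real.norm_eq_abs]
  exact mul_le_of_le_one_left (norm_nonneg _) (pow_le_one₀ (abs_nonneg h) hh)

lemma summable_norm_cauchyProduct {R : Type*} [NormedRing R] {a b : ℕ → R}
    (ha : Summable fun n => ‖a n‖) (hb : Summable fun n => ‖b n‖) : Summable fun n => ‖cauchyProduct a b n‖ :=
  summable_norm_sum_mul_antidiagonal_of_summable_norm ha hb

lemma tsum_pow_smul_mul_tsum_pow_smul [CompleteSpace 𝔄] {a b : ℕ → 𝔄}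
    (ha : Summable fun n => ‖a n‖) (hb : Summable fun n => ‖b n‖) {h : ℝ} (hh : |h| ≤ 1) :
    (∑' n, h ^ n • a n) * (∑' n, h ^ n • b n) = ∑' n, h ^ n • cauchyProduct a b n := by
  rw [tsum_mul_tsum_eq_tsum_sum_antidiagonal_of_summable_norm
    (summable_norm_pow_smul ha hh) (summable_norm_pow_smul hb hh)]
  refine tsum_congr fun n => ?_
  rw [cauchyProduct, smul_sum]
  refine sum_congr rfl fun kl hkl => ?_
  rw [smul_mul_smul_comm, ← pow_add, mem_antidiagonal.mp hkl]

lemma norm_tsum_pow_smul_le {E : Type*} [NormedAddCommGroup E] [NormedSpace ℝ E] {e : ℕ → E}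
    (he : Summable fun n => ‖e n‖) {m : ℕ} (he_lt : ∀ n < m, e n = 0) {h : ℝ} (hh : |h| ≤ 1) :
    ‖∑' n, h ^ n • e n‖ ≤ (∑' n, ‖e n‖) * |h| ^ m := by
  have hhe := summable_norm_pow_smul he hh
  calc ‖∑' n, h ^ n • e n‖ ≤ ∑' n, ‖h ^ n • e n‖ := norm_tsum_le_tsum_norm hhe
    _ ≤ ∑' n, ‖e n‖ * |h| ^ m := by
        refine hhe.tsum_le_tsum (fun n => ?_) (he.mul_right _)
        rcases lt_or_ge n m with hn | hn
        · simp [he_lt n hn]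
        · rw [norm_smul, norm_pow, Real.norm_eq_abs, mul_comm]
          exact mul_le_mul_of_nonneg_left (pow_le_pow_of_le_one (abs_nonneg h) hh hn)
            (norm_nonneg _)
    _ = (∑' n, ‖e n‖) * |h| ^ m := tsum_mul_right

noncomputable def strangCoeff (A B : 𝔄) : ℕ → 𝔄 :=
  cauchyProduct (cauchyProduct (expCoeff ((2⁻¹ : ℝ) • A)) (expCoeff B)) (expCoeff ((2⁻¹ : ℝ) • A))

lemma summable_norm_strangCoeff (A B : 𝔄) : Summable fun n => ‖strangCoeff A B n‖ :=
  summable_norm_cauchyProduct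
    (summable_norm_cauchyProduct (summable_norm_expCoeff _) (summable_norm_expCoeff _))
    (summable_norm_expCoeff _)

lemma exp_strang_eq_tsum [CompleteSpace 𝔄] (A B : 𝔄) {h : ℝ} (hh : |h| ≤ 1) :
    exp ((h / 2) • A) * exp (h • B) * exp ((h / 2) • A) = ∑' n, h ^ n • strangCoeff A B n := by
  have half : (h / 2) • A = h • (2⁻¹ : ℝ) • A := by rw [smul_smul, div_eq_mul_inv]
  rw [half, exp_smul_eq_tsum, exp_smul_eq_tsum,
    tsum_pow_smul_mul_tsum_pow_smul (summable_norm_expCoeff _) (summable_norm_expCoeff _) hh,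
    tsum_pow_smul_mul_tsum_pow_smul
      (summable_norm_cauchyProduct (summable_norm_expCoeff _) (summable_norm_expCoeff _))
      (summable_norm_expCoeff _) hh, strangCoeff]

lemma strangCoeff_eq_expCoeff_add_of_lt_three (A B : 𝔄) {n : ℕ} (hn : n < 3) :
    strangCoeff A B n = expCoeff (A + B) n := by
  -- At order two, `A²/8 + AB/2 + B²/2 + BA/2 + A²/4 + A²/8 = (A + B)²/2`: the symmetric placement
  -- of the half steps supplies both `AB` and `BA`.
  interval_cases n <;>
    simp [strangCoeff, cauchyProduct, expCoeff, Nat.antidiagonal_succ, sq, add_mul, mul_add,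
      smul_add]
  all_goals match_scalars <;> norm_num

end StrangSplitting

open StrangSplitting in
/-- The symmetric Strang splitting approximates the exact propagator to second order:
the local error over a step of size `h` is `O(h³)`. -/
theorem strang_splitting_local_error
    {𝔄 : Type*} [NormedRing 𝔄] [NormedAlgebra ℝ 𝔄] [CompleteSpace 𝔄]
    (A B : 𝔄) :
    ∃ C : ℝ, 0 ≤ C ∧ ∀ h ∈ Set.Icc (0:ℝ) 1,
      ‖exp (h • (A + B)) - exp ((h / 2) • A) * exp (h • B) * exp ((h / 2) • A)‖
        ≤ C * h ^ 3 := by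
  have he : Summable fun n => ‖expCoeff (A + B) n - strangCoeff A B n‖ :=
    ((summable_norm_expCoeff _).add (summable_norm_strangCoeff A B)).of_nonneg_of_le
      (fun _ => norm_nonneg _) fun _ => norm_sub_le _ _
  refine ⟨∑' n, ‖expCoeff (A + B) n - strangCoeff A B n‖, tsum_nonneg fun n => norm_nonneg _, ?_⟩
  rintro h ⟨h0, h1⟩
  have hh : |h| ≤ 1 := abs_le.mpr ⟨by linarith, h1⟩
  have hs := (summable_norm_pow_smul (summable_norm_expCoeff (A + B)) hh).of_norm
  have hq := (summable_norm_pow_smul (summable_norm_strangCoeff A B) hh).of_norm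
  rw [exp_smul_eq_tsum (A + B), exp_strang_eq_tsum A B hh, ← hs.tsum_sub hq]
  simp_rw [← smul_sub]
  have key := norm_tsum_pow_smul_le he
    (fun n hn => sub_eq_zero.mpr (strangCoeff_eq_expCoeff_add_of_lt_three A B hn).symm) hh
  rw [abs_of_nonneg h0] at key
  exact key
end

section
/- Let 𝔄 be a complete normed ℝ-algebra with unit (e.g., real n×n matrices with the operator norm) and let L ∈ 𝔄. Then there exist constants C ≥ 0 and h₀ > 0 such that for every h with 0 < h ≤ h₀, the element 1 − (h/2) • L is a unit in 𝔄 and ‖exp(h • L) − (1 − (h/2) • L)⁻¹ * (1 + (h/2) • L)‖ ≤ C · h³; i.e., the Crank–Nicolson (Cayley) rational approximation of the exponential has local error of order h³, making the scheme second-order accurate. -/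
/-!
Write `a = (h/2) • L`. Since `v = (1 - a)⁻¹` is a left inverse of `1 - a`, the error
`exp (2a) - v (1 + a)` equals `v ((1 - a) R - 2a³)`, where `R` is the remainder of the quadratic
Taylor polynomial `1 + 2a + 2a²` of `exp (2a)`. Both `R` and `a³` are `O(‖a‖³)`, and `‖v‖` stays
bounded by the geometric series while `‖a‖ ≤ 1/2`.
-/

open NormedSpace Nat

theorem norm_exp_sub_sum_range_le {𝔸 : Type*} [NormedRing 𝔸] [NormedAlgebra ℝ 𝔸] [CompleteSpace 𝔸]
    (x : 𝔸) {n : ℕ} (hn : 0 < n) :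
    ‖exp x - ∑ k ∈ Finset.range n, (k !⁻¹ : ℝ) • x ^ k‖ ≤ ‖x‖ ^ n / n ! * Real.exp ‖x‖ := by
  have htail := (hasSum_nat_add_iff' n).mpr (exp_series_hasSum_exp' (𝕂 := ℝ) x)
  have hmajor :
      HasSum (fun j ↦ ‖x‖ ^ n / n ! * (‖x‖ ^ j / j !)) (‖x‖ ^ n / n ! * Real.exp ‖x‖) := by
    rw [Real.exp_eq_exp_ℝ]
    exact (expSeries_div_hasSum_exp ‖x‖).mul_left _
  refine htail.norm_le_of_bounded hmajor fun j ↦ ?_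
  have hfact : (n ! * j ! : ℝ) ≤ (j + n)! := by
    rw [add_comm j n]
    exact_mod_cast Nat.le_of_dvd (by positivity) (Nat.factorial_mul_factorial_dvd_factorial_add n j)
  calc ‖((j + n)! : ℝ)⁻¹ • x ^ (j + n)‖ ≤ ((j + n)! : ℝ)⁻¹ * ‖x‖ ^ (j + n) := by
        rw [norm_smul, Real.norm_of_nonneg (by positivity)]
        gcongr
        exact norm_pow_le' x (by omega)
    _ ≤ (n ! * j ! : ℝ)⁻¹ * ‖x‖ ^ (j + n) := by gcongr
    _ = ‖x‖ ^ n / n ! * (‖x‖ ^ j / j !) := by rw [pow_add]; field_simp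

theorem sub_mul_one_add_eq {R : Type*} [Ring R] {a v : R} (hv : v * (1 - a) = 1) (e : R) :
    e - v * (1 + a) = v * ((1 - a) * (e - (1 + 2 • a + 2 • a ^ 2)) - 2 • a ^ 3) := by
  calc e - v * (1 + a)
      = v * (1 - a) * e - v * ((1 - a) * (1 + 2 • a + 2 • a ^ 2) + 2 • a ^ 3) := by
        rw [hv, one_mul]; congr 2; noncomm_ring
    _ = _ := by noncomm_ring

theorem norm_inverse_one_sub_le {R : Type*} [NormedRing R] [HasSummableGeomSeries R] {a : R}
    (ha : ‖a‖ < 1) :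
    ‖Ring.inverse (1 - a)‖ ≤ ‖(1 : R)‖ - 1 + (1 - ‖a‖)⁻¹ := by
  rw [← geom_series_eq_inverse a ha]
  exact tsum_geometric_le_of_norm_lt_one a ha

theorem norm_exp_two_smul_sub_quadratic_le {𝔸 : Type*} [NormedRing 𝔸] [NormedAlgebra ℝ 𝔸]
    [CompleteSpace 𝔸] {a : 𝔸} (ha : ‖a‖ ≤ 1 / 2) :
    ‖exp ((2 : ℝ) • a) - (1 + 2 • a + 2 • a ^ 2)‖ ≤ 4 * ‖a‖ ^ 3 := by
  have hpoly : ∑ k ∈ Finset.range 3, (k !⁻¹ : ℝ) • ((2 : ℝ) • a) ^ k = 1 + 2 • a + 2 • a ^ 2 := by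
    simp only [Finset.sum_range_succ, Finset.sum_range_zero, smul_pow,
      ← Nat.cast_smul_eq_nsmul ℝ]
    norm_num
    module
  have hnorm : ‖(2 : ℝ) • a‖ = 2 * ‖a‖ := by rw [norm_smul, Real.norm_two]
  have hexp : Real.exp (2 * ‖a‖) ≤ 3 :=
    (Real.exp_le_exp.mpr (by linarith)).trans (Real.exp_one_lt_d9.le.trans (by norm_num))
  calc _ ≤ (2 * ‖a‖) ^ 3 / 3 ! * Real.exp (2 * ‖a‖) := by
        simpa only [hpoly, hnorm] using norm_exp_sub_sum_range_le ((2 : ℝ) • a) three_pos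
    _ ≤ (2 * ‖a‖) ^ 3 / 3 ! * 3 := by gcongr
    _ = 4 * ‖a‖ ^ 3 := by norm_num [Nat.factorial]; ring

-- `‖1‖` enters the constant because a `NormedRing` need not satisfy `‖1‖ = 1`.
theorem norm_exp_two_smul_sub_cayley_le {𝔸 : Type*} [NormedRing 𝔸] [NormedAlgebra ℝ 𝔸]
    [CompleteSpace 𝔸] {a : 𝔸} (ha : ‖a‖ ≤ 1 / 2) :
    ‖exp ((2 : ℝ) • a) - Ring.inverse (1 - a) * (1 + a)‖
      ≤ 2 * (‖(1 : 𝔸)‖ + 1) * (2 * ‖(1 : 𝔸)‖ + 3) * ‖a‖ ^ 3 := by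
  have ha1 : ‖a‖ < 1 := by linarith
  have hv : ‖Ring.inverse (1 - a)‖ ≤ ‖(1 : 𝔸)‖ + 1 := by
    have : (1 - ‖a‖)⁻¹ ≤ 2 := by rw [inv_le_comm₀ (by linarith) two_pos]; linarith
    linarith [norm_inverse_one_sub_le ha1]
  have hone_sub : ‖1 - a‖ ≤ ‖(1 : 𝔸)‖ + 1 := by linarith [norm_sub_le (1 : 𝔸) a]
  have htaylor := norm_exp_two_smul_sub_quadratic_le ha
  rw [sub_mul_one_add_eq (Ring.inverse_mul_cancel _ (isUnit_one_sub_of_norm_lt_one ha1))]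
  calc _ ≤ ‖Ring.inverse (1 - a)‖ * (‖1 - a‖ * ‖exp ((2 : ℝ) • a) - (1 + 2 • a + 2 • a ^ 2)‖
          + 2 * ‖a‖ ^ 3) := by
        refine norm_mul_le_of_le le_rfl (norm_sub_le_of_le (norm_mul_le _ _) ?_)
        exact norm_nsmul_le.trans (by push_cast; gcongr; exact norm_pow_le' a three_pos)
    _ ≤ (‖(1 : 𝔸)‖ + 1) * ((‖(1 : 𝔸)‖ + 1) * (4 * ‖a‖ ^ 3) + 2 * ‖a‖ ^ 3) := by gcongr
    _ = _ := by ring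

/-- The Crank–Nicolson (Cayley) rational approximation of the exponential has local
error of order `h³`: for all sufficiently small `h > 0`, `1 − (h/2) L` is a unit and
`‖exp(hL) − (1 − (h/2)L)⁻¹ (1 + (h/2)L)‖ ≤ C h³`. -/
theorem cayley_approximation_local_error
    {𝔄 : Type*} [NormedRing 𝔄] [NormedAlgebra ℝ 𝔄] [CompleteSpace 𝔄]
    (L : 𝔄) :
    ∃ C : ℝ, 0 ≤ C ∧ ∃ h₀ : ℝ, 0 < h₀ ∧ ∀ h : ℝ, 0 < h → h ≤ h₀ →
      IsUnit (1 - (h / 2) • L) ∧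
      ‖exp (h • L) - Ring.inverse (1 - (h / 2) • L) * (1 + (h / 2) • L)‖
        ≤ C * h ^ 3 := by
  set K := 2 * (‖(1 : 𝔄)‖ + 1) * (2 * ‖(1 : 𝔄)‖ + 3)
  refine ⟨K * (‖L‖ / 2) ^ 3, by positivity, 1 / (‖L‖ + 1), by positivity, fun h hh hh₀ ↦ ?_⟩
  have hnorm : ‖(h / 2) • L‖ = h / 2 * ‖L‖ := by
    rw [norm_smul, Real.norm_of_nonneg (by positivity)]
  have hsmall : ‖(h / 2) • L‖ ≤ 1 / 2 := by
    rw [le_div_iff₀ (by positivity)] at hh₀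
    rw [hnorm]; nlinarith [norm_nonneg L]
  refine ⟨isUnit_one_sub_of_norm_lt_one (by linarith), ?_⟩
  have htwo : h • L = (2 : ℝ) • (h / 2) • L := by rw [smul_smul]; ring_nf
  calc _ ≤ K * ‖(h / 2) • L‖ ^ 3 := htwo ▸ norm_exp_two_smul_sub_cayley_le hsmall
    _ = K * (‖L‖ / 2) ^ 3 * h ^ 3 := by rw [hnorm]; ring
end
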